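/- arXiv:2201.13308 — 5 statements merged into one kernel-verified Lean document; each statement's English description precedes it below -/
import Mathlib

section
/- Suppose the strict dominance condition |c(xβ, yβ, m)| > Σ_{(α₁,α₂) ≤ (bx,by), (α₁,α₂) ≠ (xβ,yβ)} |c(α₁, α₂, m)| holds. Then for every right-hand side g : ℕ³ → ℂ and every initial data function φ : ℕ³ → ℂ there exists a function f : ℕ³ → ℂ such that (i) Σ_{i ≤ bx, j ≤ by, k ≤ m} c(i,j,k) · f(x+i, y+j, z+k) = g(x,y,z) for all (x,y,z) ∈ E, and (ii) f(x,y,z) = φ(x,y,z) for all (x,y,z) ∈ L; moreover any two functions f₁, f₂ satisfying (i) and (ii) agree at every point of Π. (Unique solvability of the Cauchy problem for a three-dimensional difference equation in a parallelepiped.) -/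
/-!
For `z ≥ m`, the values of `f` at height `z` over the `(x, y)`-projection `S` of `Π_β` are the only
terms of the equations at level `z - m` not yet fixed by lower layers or by the initial data, and
these equations are indexed by `S` itself through `(x, y) ↦ (x, y) + β`. Their coefficient matrix
is the stencil `c (·, ·, m)` centred at `β`, which the dominance condition makes strictly diagonally
dominant, hence invertible by Gershgorin's theorem. Solving these square systems layer after layer
in `z` produces a solution, and induction on `z` shows that any two solutions agree.
-/

open Finset Matrix

section Stencil

variable {M : Type*} [AddCancelCommMonoid M] [DecidableEq M]

section Semiring

variable {R : Type*} [NonUnitalNonAssocSemiring R] (S K : Finset M) (β : M) (w : M → R)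

/-- Row `p` is the stencil `u ↦ ∑ t ∈ K, w t * u (p - β + t)`, written without subtraction. -/
def stencilMatrix : Matrix S S R :=
  fun p q => ∑ t ∈ K, if (p : M) + t = q + β then w t else 0

variable {S K β}

lemma stencilMatrix_mulVec_apply {p : S} {a : M} (hp : a + β = p) (u : M → R) :
    (stencilMatrix S K β w *ᵥ fun q => u q) p =
      ∑ t ∈ K, if a + t ∈ S then w t * u (a + t) else 0 := by
  simp only [mulVec, dotProduct, stencilMatrix, sum_mul, ← hp]
  rw [sum_comm]
  refine sum_congr rfl fun t _ => ?_
  simp only [add_right_comm a β t, add_left_inj, ite_mul, zero_mul]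
  rw [sum_coe_sort S (fun q => if a + t = q then w t * u q else 0), sum_ite_eq]

lemma stencilMatrix_apply_self (hβ : β ∈ K) (p : S) : stencilMatrix S K β w p p = w β := by
  simp [stencilMatrix, hβ]

end Semiring

variable {𝕜 : Type*} [NormedField 𝕜] {S K : Finset M} {β : M} (w : M → 𝕜)

lemma sum_norm_stencilMatrix_erase_le (p : S) :
    ∑ q ∈ univ.erase p, ‖stencilMatrix S K β w p q‖ ≤ ∑ t ∈ K.erase β, ‖w t‖ := by
  calc ∑ q ∈ univ.erase p, ‖stencilMatrix S K β w p q‖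
      ≤ ∑ q ∈ univ.erase p, ∑ t ∈ K, if (p : M) + t = q + β then ‖w t‖ else 0 := by
        gcongr with q
        refine (norm_sum_le _ _).trans_eq (sum_congr rfl fun t _ => ?_)
        split_ifs <;> simp
    _ = ∑ t ∈ K, ∑ q ∈ univ.erase p, if (p : M) + t = q + β then ‖w t‖ else 0 := sum_comm
    -- offset `t` reaches at most one column `q`, and reaches `q = p` exactly when `t = β`
    _ ≤ ∑ t ∈ K, if t = β then 0 else ‖w t‖ := by
        gcongr with t
        split_ifs with ht
        · refine (sum_eq_zero fun q hq => if_neg fun h => ?_).le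
          subst ht
          exact (mem_erase.1 hq).1 (Subtype.ext (add_right_cancel h).symm)
        · have hcard : ((univ.erase p).filter fun q : S => (p : M) + t = q + β).card ≤ 1 :=
            card_le_one.2 fun q hq r hr =>
              Subtype.ext (add_right_cancel ((mem_filter.1 hq).2.symm.trans (mem_filter.1 hr).2))
          rw [← sum_filter, sum_const]
          exact (nsmul_le_nsmul_left (norm_nonneg _) hcard).trans_eq (one_nsmul _)
    _ = ∑ t ∈ K.erase β, ‖w t‖ := by
        rw [sum_ite, sum_const_zero, zero_add, filter_ne']

lemma det_stencilMatrix_ne_zero (hβ : β ∈ K) (hdom : ∑ t ∈ K.erase β, ‖w t‖ < ‖w β‖) :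
    (stencilMatrix S K β w).det ≠ 0 :=
  det_ne_zero_of_sum_row_lt_diag fun p => by
    rw [stencilMatrix_apply_self w hβ]
    exact (sum_norm_stencilMatrix_erase_le w p).trans_lt hdom

end Stencil

namespace CauchyProblem

variable (Bx BY bx bY m xβ yβ : ℕ) (c : ℕ → ℕ → ℕ → ℂ)

def box : Finset (ℕ × ℕ) := range (bx + 1) ×ˢ range (bY + 1)

/-- The `(x, y)`-projection of `Π_β`. -/
def slab : Finset (ℕ × ℕ) := Icc xβ (Bx - bx + xβ) ×ˢ Icc yβ (BY - bY + yβ)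

local notation "S" => slab Bx BY bx bY xβ yβ

noncomputable def topMatrix : Matrix S S ℂ :=
  stencilMatrix S (box bx bY) (xβ, yβ) fun t => c t.1 t.2 m

local notation "A" => topMatrix Bx BY bx bY m xβ yβ c

def diffOp (f : ℕ → ℕ → ℕ → ℂ) (x y z : ℕ) : ℂ :=
  ∑ i ∈ range (bx + 1), ∑ j ∈ range (bY + 1), ∑ k ∈ range (m + 1),
    c i j k * f (x + i) (y + j) (z + k)

def knownTerms (f : ℕ → ℕ → ℕ → ℂ) (x y z : ℕ) : ℂ :=
  ∑ t ∈ box bx bY, ((∑ k ∈ range m, c t.1 t.2 k * f (x + t.1) (y + t.2) (z + k)) +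
    if (x + t.1, y + t.2) ∈ S then 0 else c t.1 t.2 m * f (x + t.1) (y + t.2) (z + m))

def layerRhs (f g : ℕ → ℕ → ℕ → ℂ) (z : ℕ) (p : S) : ℂ :=
  g (p.1.1 - xβ) (p.1.2 - yβ) z - knownTerms Bx BY bx bY m xβ yβ c f (p.1.1 - xβ) (p.1.2 - yβ) z

/-- Lower layers are read through `if k < z` only to make the recursion well founded:
`knownTerms` at level `z - m` needs layer `z` just off the slab, where `solution` is `φ` anyway. -/
noncomputable def solution (g φ : ℕ → ℕ → ℕ → ℂ) (x y z : ℕ) : ℂ :=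
  if h : (x, y) ∈ S ∧ m ≤ z then
    ((A)⁻¹ *ᵥ layerRhs Bx BY bx bY m xβ yβ c
      (fun x y k => if k < z then solution g φ x y k else φ x y k) g (z - m)) ⟨(x, y), h.1⟩
  else φ x y z
termination_by z

variable {Bx BY bx bY m xβ yβ c}

lemma mem_slab_and_le_iff {x y z : ℕ} : (x, y) ∈ S ∧ m ≤ z ↔
    xβ ≤ x ∧ x ≤ Bx - bx + xβ ∧ yβ ≤ y ∧ y ≤ BY - bY + yβ ∧ m ≤ z := by
  simp [slab, and_assoc]

lemma mem_slab_iff_exists_add {p : ℕ × ℕ} :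
    p ∈ S ↔ ∃ x y, x ≤ Bx - bx ∧ y ≤ BY - bY ∧ (x, y) + (xβ, yβ) = p := by
  constructor
  · intro hp
    simp only [slab, mem_product, mem_Icc] at hp
    exact ⟨p.1 - xβ, p.2 - yβ, by omega, by omega, Prod.ext (by simp; omega) (by simp; omega)⟩
  · rintro ⟨x, y, hx, hy, rfl⟩
    simp only [slab, mem_product, mem_Icc, Prod.mk_add_mk]
    omega

lemma isUnit_topMatrix (hxβ : xβ ≤ bx) (hyβ : yβ ≤ bY)
    (hdom : ∑ t ∈ (box bx bY).erase (xβ, yβ), ‖c t.1 t.2 m‖ < ‖c xβ yβ m‖) : IsUnit A :=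
  (isUnit_iff_isUnit_det _).2 <| isUnit_iff_ne_zero.2 <|
    det_stencilMatrix_ne_zero _ (by simp [box]; omega) hdom

lemma diffOp_eq_topMatrix_mulVec_add_knownTerms (f : ℕ → ℕ → ℕ → ℂ) {x y z : ℕ} {p : S}
    (hp : (x, y) + (xβ, yβ) = p) :
    diffOp bx bY m c f x y z =
      (A *ᵥ fun q => f q.1.1 q.1.2 (z + m)) p + knownTerms Bx BY bx bY m xβ yβ c f x y z := by
  rw [topMatrix, stencilMatrix_mulVec_apply _ hp (fun q => f q.1 q.2 (z + m)), diffOp,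
    ← sum_product', knownTerms, ← sum_add_distrib]
  refine sum_congr rfl fun ⟨i, j⟩ _ => ?_
  simp only [Prod.mk_add_mk, sum_range_succ]
  split_ifs <;> ring

lemma knownTerms_congr {f₁ f₂ : ℕ → ℕ → ℕ → ℂ} {x y z : ℕ}
    (hlow : ∀ t ∈ box bx bY, ∀ k < m,
      f₁ (x + t.1) (y + t.2) (z + k) = f₂ (x + t.1) (y + t.2) (z + k))
    (htop : ∀ t ∈ box bx bY, (x + t.1, y + t.2) ∉ S →
      f₁ (x + t.1) (y + t.2) (z + m) = f₂ (x + t.1) (y + t.2) (z + m)) :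
    knownTerms Bx BY bx bY m xβ yβ c f₁ x y z = knownTerms Bx BY bx bY m xβ yβ c f₂ x y z := by
  refine sum_congr rfl fun t ht => ?_
  congr 1
  · exact sum_congr rfl fun k hk => by rw [hlow t ht k (mem_range.1 hk)]
  · split_ifs with hS
    · rfl
    · rw [htop t ht hS]

lemma solution_of_not_mem {g φ : ℕ → ℕ → ℕ → ℂ} {x y z : ℕ} (h : ¬((x, y) ∈ S ∧ m ≤ z)) :
    solution Bx BY bx bY m xβ yβ c g φ x y z = φ x y z := by
  rw [solution, dif_neg h]

variable (hxβ : xβ ≤ bx) (hyβ : yβ ≤ bY)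
  (hdom : ∑ t ∈ (box bx bY).erase (xβ, yβ), ‖c t.1 t.2 m‖ < ‖c xβ yβ m‖)
include hxβ hyβ hdom

lemma topMatrix_mulVec_solution (g φ : ℕ → ℕ → ℕ → ℂ) (z : ℕ) :
    (A *ᵥ fun q => solution Bx BY bx bY m xβ yβ c g φ q.1.1 q.1.2 (z + m)) =
      layerRhs Bx BY bx bY m xβ yβ c (solution Bx BY bx bY m xβ yβ c g φ) g z := by
  have hlayer : (fun q : S => solution Bx BY bx bY m xβ yβ c g φ q.1.1 q.1.2 (z + m)) =
      (A)⁻¹ *ᵥ layerRhs Bx BY bx bY m xβ yβ c (fun x y k =>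
        if k < z + m then solution Bx BY bx bY m xβ yβ c g φ x y k else φ x y k) g z := by
    funext q
    rw [solution, dif_pos ⟨q.2, by omega⟩, Nat.add_sub_cancel]
  rw [hlayer, mulVec_mulVec,
    mul_nonsing_inv _ ((isUnit_iff_isUnit_det _).1 (isUnit_topMatrix hxβ hyβ hdom)), one_mulVec]
  funext p
  rw [layerRhs, layerRhs, knownTerms_congr]
  · intro t _ k hk
    rw [if_pos (by omega)]
  · intro t _ hS
    rw [if_neg (by omega), solution_of_not_mem fun h => hS h.1]

lemma diffOp_solution (g φ : ℕ → ℕ → ℕ → ℂ) (x y z : ℕ) (hx : x ≤ Bx - bx)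
    (hy : y ≤ BY - bY) : diffOp bx bY m c (solution Bx BY bx bY m xβ yβ c g φ) x y z = g x y z := by
  have hS : (x, y) + (xβ, yβ) ∈ S := mem_slab_iff_exists_add.2 ⟨x, y, hx, hy, rfl⟩
  rw [diffOp_eq_topMatrix_mulVec_add_knownTerms _ (p := ⟨_, hS⟩) rfl,
    topMatrix_mulVec_solution hxβ hyβ hdom, layerRhs]
  simp

lemma eq_of_diffOp_eq (hbx : bx ≤ Bx) (hbY : bY ≤ BY) {f₁ f₂ : ℕ → ℕ → ℕ → ℂ}
    (heq : ∀ x y z, x ≤ Bx - bx → y ≤ BY - bY →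
      diffOp bx bY m c f₁ x y z = diffOp bx bY m c f₂ x y z)
    (hinit : ∀ x y z, x ≤ Bx → y ≤ BY → ¬((x, y) ∈ S ∧ m ≤ z) → f₁ x y z = f₂ x y z)
    (x y z : ℕ) (hx : x ≤ Bx) (hy : y ≤ BY) : f₁ x y z = f₂ x y z := by
  induction z using Nat.strong_induction_on generalizing x y with
  | _ z ih =>
  by_cases hL : (x, y) ∈ S ∧ m ≤ z
  · obtain ⟨hxy, z, rfl⟩ : (x, y) ∈ S ∧ ∃ z', z = z' + m := ⟨hL.1, z - m, by omega⟩
    have hlayer : (fun q : S => f₁ q.1.1 q.1.2 (z + m)) = fun q => f₂ q.1.1 q.1.2 (z + m) := by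
      refine mulVec_injective_iff_isUnit.2 (isUnit_topMatrix hxβ hyβ hdom) (funext fun p => ?_)
      obtain ⟨x', y', hx', hy', hp⟩ := mem_slab_iff_exists_add.1 p.2
      have hknown : knownTerms Bx BY bx bY m xβ yβ c f₁ x' y' z =
          knownTerms Bx BY bx bY m xβ yβ c f₂ x' y' z := by
        refine knownTerms_congr (fun t ht k hk => ?_) (fun t ht hS => ?_) <;>
          simp only [box, mem_product, mem_range] at ht
        · exact ih _ (by omega) _ _ (by omega) (by omega)
        · exact hinit _ _ _ (by omega) (by omega) fun h => hS h.1
      have := heq x' y' z hx' hy'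
      rwa [diffOp_eq_topMatrix_mulVec_add_knownTerms f₁ hp,
        diffOp_eq_topMatrix_mulVec_add_knownTerms f₂ hp, hknown, add_left_inj] at this
    exact congrFun hlayer ⟨(x, y), hxy⟩
  · exact hinit x y z hx hy hL

end CauchyProblem

theorem cauchy_problem_unique_solvability_general
    (Bx BY bx bY m : ℕ) (hbx : bx < Bx) (hbY : bY < BY)
    (c : ℕ → ℕ → ℕ → ℂ)
    (xβ yβ : ℕ) (hxβ : xβ ≤ bx) (hyβ : yβ ≤ bY)
    (hdom : ∑ p ∈ ((Finset.range (bx + 1)) ×ˢ (Finset.range (bY + 1))).erase (xβ, yβ),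
        ‖c p.1 p.2 m‖ < ‖c xβ yβ m‖) :
    ∀ g φ : ℕ → ℕ → ℕ → ℂ,
      (∃ f : ℕ → ℕ → ℕ → ℂ,
        (∀ x y z : ℕ, x ≤ Bx - bx → y ≤ BY - bY →
          ∑ i ∈ Finset.range (bx + 1), ∑ j ∈ Finset.range (bY + 1),
            ∑ k ∈ Finset.range (m + 1),
              c i j k * f (x + i) (y + j) (z + k) = g x y z) ∧
        (∀ x y z : ℕ, (x ≤ Bx ∧ y ≤ BY) ∧
            ¬(xβ ≤ x ∧ x ≤ Bx - bx + xβ ∧ yβ ≤ y ∧ y ≤ BY - bY + yβ ∧ m ≤ z) →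
          f x y z = φ x y z)) ∧
      (∀ f₁ f₂ : ℕ → ℕ → ℕ → ℂ,
        ((∀ x y z : ℕ, x ≤ Bx - bx → y ≤ BY - bY →
          ∑ i ∈ Finset.range (bx + 1), ∑ j ∈ Finset.range (bY + 1),
            ∑ k ∈ Finset.range (m + 1),
              c i j k * f₁ (x + i) (y + j) (z + k) = g x y z) ∧
         (∀ x y z : ℕ, (x ≤ Bx ∧ y ≤ BY) ∧
            ¬(xβ ≤ x ∧ x ≤ Bx - bx + xβ ∧ yβ ≤ y ∧ y ≤ BY - bY + yβ ∧ m ≤ z) →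
           f₁ x y z = φ x y z)) →
        ((∀ x y z : ℕ, x ≤ Bx - bx → y ≤ BY - bY →
          ∑ i ∈ Finset.range (bx + 1), ∑ j ∈ Finset.range (bY + 1),
            ∑ k ∈ Finset.range (m + 1),
              c i j k * f₂ (x + i) (y + j) (z + k) = g x y z) ∧
         (∀ x y z : ℕ, (x ≤ Bx ∧ y ≤ BY) ∧
            ¬(xβ ≤ x ∧ x ≤ Bx - bx + xβ ∧ yβ ≤ y ∧ y ≤ BY - bY + yβ ∧ m ≤ z) →
           f₂ x y z = φ x y z)) →
        ∀ x y z : ℕ, x ≤ Bx → y ≤ BY → f₁ x y z = f₂ x y z) := by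
  open CauchyProblem in
  intro g φ
  refine ⟨⟨solution Bx BY bx bY m xβ yβ c g φ,
      diffOp_solution hxβ hyβ hdom g φ,
      fun x y z ⟨_, hL⟩ => solution_of_not_mem (mem_slab_and_le_iff.not.2 hL)⟩,
    fun f₁ f₂ ⟨heq₁, hinit₁⟩ ⟨heq₂, hinit₂⟩ => ?_⟩
  refine eq_of_diffOp_eq hxβ hyβ hdom hbx.le hbY.le
    (fun x y z hx hy => (heq₁ x y z hx hy).trans (heq₂ x y z hx hy).symm)
    fun x y z hx hy hL => ?_
  rw [mem_slab_and_le_iff] at hL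
  exact (hinit₁ x y z ⟨⟨hx, hy⟩, hL⟩).trans (hinit₂ x y z ⟨⟨hx, hy⟩, hL⟩).symm

/-- Unique solvability of the Cauchy problem for a three-dimensional difference
equation in a parallelepiped: under the strict dominance condition on the top-layer
coefficients, for every right-hand side `g` and initial data `φ` there is a solution
`f` of the difference equation on the equation domain `E` agreeing with `φ` on the
initial-data set `L = Π \ Π_β`, and any two such solutions agree on `Π`. -/
theorem cauchy_problem_unique_solvability
    (Bx BY bx bY m : ℕ) (hbx : bx < Bx) (hbY : bY < BY) (hm : 1 ≤ m)
    (c : ℕ → ℕ → ℕ → ℂ)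
    (xβ yβ : ℕ) (hxβ : xβ ≤ bx) (hyβ : yβ ≤ bY)
    (hc : c xβ yβ m ≠ 0)
    (hdom : ∑ p ∈ ((Finset.range (bx + 1)) ×ˢ (Finset.range (bY + 1))).erase (xβ, yβ),
        ‖c p.1 p.2 m‖ < ‖c xβ yβ m‖) :
    ∀ g φ : ℕ → ℕ → ℕ → ℂ,
      (∃ f : ℕ → ℕ → ℕ → ℂ,
        (∀ x y z : ℕ, x ≤ Bx - bx → y ≤ BY - bY →
          ∑ i ∈ Finset.range (bx + 1), ∑ j ∈ Finset.range (bY + 1),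
            ∑ k ∈ Finset.range (m + 1),
              c i j k * f (x + i) (y + j) (z + k) = g x y z) ∧
        (∀ x y z : ℕ, (x ≤ Bx ∧ y ≤ BY) ∧
            ¬(xβ ≤ x ∧ x ≤ Bx - bx + xβ ∧ yβ ≤ y ∧ y ≤ BY - bY + yβ ∧ m ≤ z) →
          f x y z = φ x y z)) ∧
      (∀ f₁ f₂ : ℕ → ℕ → ℕ → ℂ,
        ((∀ x y z : ℕ, x ≤ Bx - bx → y ≤ BY - bY →
          ∑ i ∈ Finset.range (bx + 1), ∑ j ∈ Finset.range (bY + 1),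
            ∑ k ∈ Finset.range (m + 1),
              c i j k * f₁ (x + i) (y + j) (z + k) = g x y z) ∧
         (∀ x y z : ℕ, (x ≤ Bx ∧ y ≤ BY) ∧
            ¬(xβ ≤ x ∧ x ≤ Bx - bx + xβ ∧ yβ ≤ y ∧ y ≤ BY - bY + yβ ∧ m ≤ z) →
           f₁ x y z = φ x y z)) →
        ((∀ x y z : ℕ, x ≤ Bx - bx → y ≤ BY - bY →
          ∑ i ∈ Finset.range (bx + 1), ∑ j ∈ Finset.range (bY + 1),
            ∑ k ∈ Finset.range (m + 1),
              c i j k * f₂ (x + i) (y + j) (z + k) = g x y z) ∧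
         (∀ x y z : ℕ, (x ≤ Bx ∧ y ≤ BY) ∧
            ¬(xβ ≤ x ∧ x ≤ Bx - bx + xβ ∧ yβ ≤ y ∧ y ≤ BY - bY + yβ ∧ m ≤ z) →
           f₂ x y z = φ x y z)) →
        ∀ x y z : ℕ, x ≤ Bx → y ≤ BY → f₁ x y z = f₂ x y z) :=
  cauchy_problem_unique_solvability_general Bx BY bx bY m hbx hbY c xβ yβ hxβ hyβ hdom
end

section
/- Suppose the strict dominance condition |c(xβ, yβ, m)| > Σ_{(α₁,α₂) ≤ (bx,by), (α₁,α₂) ≠ (xβ,yβ)} |c(α₁, α₂, m)| holds. If a function f : ℕ³ → ℂ satisfies the homogeneous equation Σ_{i ≤ bx, j ≤ by, k ≤ m} c(i,j,k) · f(x+i, y+j, z+k) = 0 for all (x,y,z) ∈ E and f vanishes identically on L, then f vanishes identically on Π. (Uniqueness for the Cauchy problem for a three-dimensional difference equation in a parallelepiped.) -/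
/-!
Induct on `z`. Once `f` vanishes on all levels below `z ≥ m`, the equation at `(x, y, z - m)`
collapses to the two-dimensional equation `∑ c(i, j, m) f(x + i, y + j, z) = 0`. Take a point
of the rectangle where `|f(·, ·, z)|` is maximal. Either it lies in the initial-data set, so the
value there is zero, or it is the `β`-shift of an equation point. In the second case all the
other terms of that equation are bounded by the maximum, and strict dominance of `c(xβ, yβ, m)`
forces the maximum to be zero.
-/

open Finset

section DominantCoefficient

variable {ι 𝕜 E : Type*} [DecidableEq ι] [NormedField 𝕜] [NormedAddCommGroup E] [NormedSpace 𝕜 E]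

theorem eq_zero_of_sum_smul_eq_zero_of_norm_le_of_dominant {s : Finset ι} {i : ι} (hi : i ∈ s)
    (a : ι → 𝕜) (v : ι → E) (hsum : ∑ j ∈ s, a j • v j = 0)
    (hdom : ∑ j ∈ s.erase i, ‖a j‖ < ‖a i‖) (hmax : ∀ j ∈ s, ‖v j‖ ≤ ‖v i‖) :
    v i = 0 := by
  by_contra hv
  have hpos : 0 < ‖v i‖ := norm_pos_iff.mpr hv
  have hi_eq : a i • v i = -∑ j ∈ s.erase i, a j • v j :=
    eq_neg_of_add_eq_zero_left ((add_sum_erase s _ hi).trans hsum)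
  have hbound : ‖a i‖ * ‖v i‖ ≤ (∑ j ∈ s.erase i, ‖a j‖) * ‖v i‖ :=
    calc ‖a i‖ * ‖v i‖ = ‖∑ j ∈ s.erase i, a j • v j‖ := by rw [← norm_smul, hi_eq, norm_neg]
      _ ≤ ∑ j ∈ s.erase i, ‖a j‖ * ‖v j‖ := by
        simpa only [norm_smul] using norm_sum_le (s.erase i) fun j => a j • v j
      _ ≤ (∑ j ∈ s.erase i, ‖a j‖) * ‖v i‖ := by
        rw [sum_mul]
        exact sum_le_sum fun j hj =>
          mul_le_mul_of_nonneg_left (hmax j (mem_of_mem_erase hj)) (norm_nonneg _)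
  exact (mul_lt_mul_of_pos_right hdom hpos).not_ge hbound

theorem eq_zero_of_dominant_difference_eq {Bx BY bx bY xβ yβ : ℕ} (hbx : bx ≤ Bx)
    (hbY : bY ≤ BY) (hxβ : xβ ≤ bx) (hyβ : yβ ≤ bY) (a : ℕ → ℕ → 𝕜)
    (hdom : ∑ p ∈ (range (bx + 1) ×ˢ range (bY + 1)).erase (xβ, yβ), ‖a p.1 p.2‖ < ‖a xβ yβ‖)
    (g : ℕ → ℕ → E)
    (heq : ∀ x ≤ Bx - bx, ∀ y ≤ BY - bY,
      ∑ i ∈ range (bx + 1), ∑ j ∈ range (bY + 1), a i j • g (x + i) (y + j) = 0)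
    (hL : ∀ x ≤ Bx, ∀ y ≤ BY,
      ¬(xβ ≤ x ∧ x ≤ Bx - bx + xβ ∧ yβ ≤ y ∧ y ≤ BY - bY + yβ) → g x y = 0) :
    ∀ x ≤ Bx, ∀ y ≤ BY, g x y = 0 := by
  obtain ⟨⟨qx, qy⟩, hqR, hqmax⟩ := exists_max_image (range (Bx + 1) ×ˢ range (BY + 1))
    (fun p => ‖g p.1 p.2‖) ⟨(0, 0), by simp⟩
  simp only [mem_product, mem_range, Nat.lt_succ_iff, and_imp, Prod.forall] at hqR hqmax
  suffices hq : g qx qy = 0 by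
    intro x hx y hy
    simpa [hq] using hqmax x y hx hy
  by_cases hband : xβ ≤ qx ∧ qx ≤ Bx - bx + xβ ∧ yβ ≤ qy ∧ qy ≤ BY - bY + yβ
  swap
  · exact hL qx hqR.1 qy hqR.2 hband
  obtain ⟨x, rfl⟩ : ∃ x, qx = x + xβ := ⟨qx - xβ, by omega⟩
  obtain ⟨y, rfl⟩ : ∃ y, qy = y + yβ := ⟨qy - yβ, by omega⟩
  refine eq_zero_of_sum_smul_eq_zero_of_norm_le_of_dominant (i := (xβ, yβ))
    (by simp only [mem_product, mem_range]; omega) (fun p => a p.1 p.2)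
    (fun p => g (x + p.1) (y + p.2)) ?_ hdom ?_
  · rw [sum_product]
    exact heq x (by omega) y (by omega)
  · simp only [mem_product, mem_range, and_imp, Prod.forall]
    intro i j hi hj
    exact hqmax _ _ (by omega) (by omega)

end DominantCoefficient

theorem cauchy_problem_uniqueness_general
    (Bx BY bx bY m : ℕ) (hbx : bx < Bx) (hbY : bY < BY)
    (c : ℕ → ℕ → ℕ → ℂ)
    (xβ yβ : ℕ) (hxβ : xβ ≤ bx) (hyβ : yβ ≤ bY)
    (hdom : ∑ p ∈ ((Finset.range (bx + 1)) ×ˢ (Finset.range (bY + 1))).erase (xβ, yβ),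
        ‖c p.1 p.2 m‖ < ‖c xβ yβ m‖)
    (f : ℕ → ℕ → ℕ → ℂ)
    (heq : ∀ x y z : ℕ, x ≤ Bx - bx → y ≤ BY - bY →
      ∑ i ∈ Finset.range (bx + 1), ∑ j ∈ Finset.range (bY + 1),
        ∑ k ∈ Finset.range (m + 1),
          c i j k * f (x + i) (y + j) (z + k) = 0)
    (hL : ∀ x y z : ℕ, (x ≤ Bx ∧ y ≤ BY) ∧
        ¬(xβ ≤ x ∧ x ≤ Bx - bx + xβ ∧ yβ ≤ y ∧ y ≤ BY - bY + yβ ∧ m ≤ z) →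
      f x y z = 0) :
    ∀ x y z : ℕ, x ≤ Bx → y ≤ BY → f x y z = 0 := by
  suffices hlevel : ∀ z, ∀ x ≤ Bx, ∀ y ≤ BY, f x y z = 0 from
    fun x y z hx hy => hlevel z x hx y hy
  intro z
  induction z using Nat.strong_induction_on with
  | _ z IH =>
    by_cases hzm : z < m
    · exact fun x hx y hy => hL x y z ⟨⟨hx, hy⟩, by omega⟩
    refine eq_zero_of_dominant_difference_eq hbx.le hbY.le hxβ hyβ (fun i j => c i j m) hdom
      (fun x y => f x y z) (fun x hx y hy => ?_)
      (fun x hx y hy hband => hL x y z ⟨⟨hx, hy⟩, by tauto⟩)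
    -- the lower levels vanish, so only the `k = m` terms of the equation at `(x, y, z - m)` survive
    rw [← heq x y (z - m) hx hy]
    refine sum_congr rfl fun i hi => sum_congr rfl fun j hj => ?_
    simp only [mem_range] at hi hj
    rw [sum_range_succ, Nat.sub_add_cancel (not_lt.mp hzm), smul_eq_mul, right_eq_add]
    refine sum_eq_zero fun k hk => ?_
    have hk : k < m := mem_range.mp hk
    rw [IH (z - m + k) (by omega) (x + i) (by omega) (y + j) (by omega), mul_zero]

/-- Uniqueness for the Cauchy problem for a three-dimensional difference equation in a
parallelepiped: under the strict dominance condition, a solution of the homogeneous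
difference equation on the equation domain `E` that vanishes identically on the
initial-data set `L = Π \ Π_β` vanishes identically on `Π`. -/
theorem cauchy_problem_uniqueness
    (Bx BY bx bY m : ℕ) (hbx : bx < Bx) (hbY : bY < BY) (hm : 1 ≤ m)
    (c : ℕ → ℕ → ℕ → ℂ)
    (xβ yβ : ℕ) (hxβ : xβ ≤ bx) (hyβ : yβ ≤ bY)
    (hc : c xβ yβ m ≠ 0)
    (hdom : ∑ p ∈ ((Finset.range (bx + 1)) ×ˢ (Finset.range (bY + 1))).erase (xβ, yβ),
        ‖c p.1 p.2 m‖ < ‖c xβ yβ m‖)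
    (f : ℕ → ℕ → ℕ → ℂ)
    (heq : ∀ x y z : ℕ, x ≤ Bx - bx → y ≤ BY - bY →
      ∑ i ∈ Finset.range (bx + 1), ∑ j ∈ Finset.range (bY + 1),
        ∑ k ∈ Finset.range (m + 1),
          c i j k * f (x + i) (y + j) (z + k) = 0)
    (hL : ∀ x y z : ℕ, (x ≤ Bx ∧ y ≤ BY) ∧
        ¬(xβ ≤ x ∧ x ≤ Bx - bx + xβ ∧ yβ ≤ y ∧ y ≤ BY - bY + yβ ∧ m ≤ z) →
      f x y z = 0) :
    ∀ x y z : ℕ, x ≤ Bx → y ≤ BY → f x y z = 0 :=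
  cauchy_problem_uniqueness_general Bx BY bx bY m hbx hbY c xβ yβ hxβ hyβ hdom f heq hL
end

section
/- Suppose the strict dominance condition |c(xβ, yβ, m)| > Σ_{(α₁,α₂) ≤ (bx,by), (α₁,α₂) ≠ (xβ,yβ)} |c(α₁, α₂, m)| holds. Then for every row index p = (x,y) ∈ I, the matrix T satisfies Σ_{q ∈ I, q ≠ p} |T(p,q)| ≤ Σ_{(α₁,α₂) ≤ (bx,by), (α₁,α₂) ≠ (xβ,yβ)} |c(α₁, α₂, m)| < |c(xβ, yβ, m)| = |T(p,p)|; that is, T is strictly diagonally dominant by rows. (The matrix of the one-layer linear system arising from the Cauchy problem is strictly diagonally dominant.) -/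
/-!
Row `p` of `T` reads the stencil `c` through the translation `q ↦ q - p + β` of `ℤ²`, which
is injective and sends `p` to `β`. So the off-diagonal entries of row `p` are distinct
coefficients `c α` with `α ≠ β` (or zero, when `q - p + β` leaves the box), and their absolute
values sum to at most the dominance sum, while the diagonal entry is `c β`.
-/

open Finset

theorem Finset.sum_le_sum_of_ne_zero_of_nonneg {ι M : Type*} [AddCommMonoid M] [PartialOrder M]
    [IsOrderedAddMonoid M] {s t : Finset ι} {f : ι → M} (h : ∀ x ∈ s, f x ≠ 0 → x ∈ t)
    (hf : ∀ x ∈ t, 0 ≤ f x) : ∑ x ∈ s, f x ≤ ∑ x ∈ t, f x := by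
  classical
  calc ∑ x ∈ s, f x = ∑ x ∈ s with f x ≠ 0, f x := (sum_filter_ne_zero s).symm
    _ ≤ ∑ x ∈ t, f x :=
      sum_le_sum_of_subset_of_nonneg (fun x hx ↦ h x (mem_filter.1 hx).1 (mem_filter.1 hx).2)
        fun x hx _ ↦ hf x hx

namespace LayerMatrix

def boxExtend (c : ℕ → ℕ → ℂ) (bx bY : ℕ) (a : ℤ × ℤ) : ℂ :=
  if 0 ≤ a.1 ∧ a.1 ≤ bx ∧ 0 ≤ a.2 ∧ a.2 ≤ bY then c a.1.toNat a.2.toNat else 0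

def shift (β p q : ℕ × ℕ) : ℤ × ℤ :=
  ((q.1 : ℤ) - p.1 + β.1, (q.2 : ℤ) - p.2 + β.2)

@[simps]
def natCastEmb : ℕ × ℕ ↪ ℤ × ℤ :=
  ⟨fun α ↦ ((α.1 : ℤ), (α.2 : ℤ)), fun α α' h ↦ by
    simp only [Prod.mk.injEq, Nat.cast_inj] at h
    exact Prod.ext h.1 h.2⟩

variable {c : ℕ → ℕ → ℂ} {bx bY : ℕ}

theorem boxExtend_natCastEmb {α : ℕ × ℕ} (h₁ : α.1 ≤ bx) (h₂ : α.2 ≤ bY) :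
    boxExtend c bx bY (natCastEmb α) = c α.1 α.2 := by
  simp [boxExtend, h₁, h₂]

theorem mem_map_natCastEmb_of_boxExtend_ne_zero {a : ℤ × ℤ} (ha : boxExtend c bx bY a ≠ 0) :
    a ∈ (range (bx + 1) ×ˢ range (bY + 1)).map natCastEmb := by
  unfold boxExtend at ha
  split_ifs at ha with hbox
  · obtain ⟨h₁, h₂, h₃, h₄⟩ := hbox
    refine mem_map.2 ⟨(a.1.toNat, a.2.toNat), ?_, ?_⟩
    · simp only [mem_product, mem_range]
      omega
    · simp [h₁, h₃]
  · exact absurd rfl ha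

theorem sum_norm_boxExtend_le {s : Finset (ℤ × ℤ)} {β : ℕ × ℕ} (hβ : natCastEmb β ∉ s) :
    ∑ a ∈ s, ‖boxExtend c bx bY a‖ ≤
      ∑ α ∈ (range (bx + 1) ×ˢ range (bY + 1)).erase β, ‖c α.1 α.2‖ := by
  have hbox : ∑ α ∈ (range (bx + 1) ×ˢ range (bY + 1)).erase β, ‖c α.1 α.2‖ =
      ∑ a ∈ ((range (bx + 1) ×ˢ range (bY + 1)).erase β).map natCastEmb,
        ‖boxExtend c bx bY a‖ := by
    rw [sum_map]
    refine sum_congr rfl fun α hα ↦ ?_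
    obtain ⟨h₁, h₂⟩ := mem_product.1 (mem_of_mem_erase hα)
    rw [boxExtend_natCastEmb (Nat.lt_succ_iff.1 (mem_range.1 h₁))
      (Nat.lt_succ_iff.1 (mem_range.1 h₂))]
  rw [hbox, map_erase]
  refine sum_le_sum_of_ne_zero_of_nonneg (fun a ha hne ↦ ?_) fun _ _ ↦ norm_nonneg _
  exact mem_erase.2 ⟨ne_of_mem_of_not_mem ha hβ,
    mem_map_natCastEmb_of_boxExtend_ne_zero (norm_ne_zero_iff.1 hne)⟩

theorem shift_self (β p : ℕ × ℕ) : shift β p p = natCastEmb β := by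
  simp [shift]

theorem shift_injective (β p : ℕ × ℕ) : Function.Injective (shift β p) := fun q q' h ↦ by
  simp only [shift, Prod.mk.injEq, add_left_inj, sub_left_inj, Nat.cast_inj] at h
  exact Prod.ext h.1 h.2

theorem boxExtend_shift_self {β : ℕ × ℕ} (h₁ : β.1 ≤ bx) (h₂ : β.2 ≤ bY) (p : ℕ × ℕ) :
    boxExtend c bx bY (shift β p p) = c β.1 β.2 := by
  rw [shift_self, boxExtend_natCastEmb h₁ h₂]

theorem sum_erase_norm_boxExtend_shift_le {ι : Type*} [Fintype ι] [DecidableEq ι]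
    (v : ι ↪ ℕ × ℕ) (β : ℕ × ℕ) (p : ι) :
    ∑ q ∈ univ.erase p, ‖boxExtend c bx bY (shift β (v p) (v q))‖ ≤
      ∑ α ∈ (range (bx + 1) ×ˢ range (bY + 1)).erase β, ‖c α.1 α.2‖ := by
  have hinj : Set.InjOn (fun q ↦ shift β (v p) (v q)) (univ.erase p : Finset ι) :=
    ((shift_injective β (v p)).comp v.injective).injOn
  rw [← sum_image (f := fun a ↦ ‖boxExtend c bx bY a‖) hinj]
  refine sum_norm_boxExtend_le fun hβ ↦ ?_
  obtain ⟨q, hq, hqβ⟩ := mem_image.1 hβ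
  rw [← shift_self β (v p), (shift_injective β (v p)).eq_iff, v.injective.eq_iff] at hqβ
  exact (ne_of_mem_erase hq) hqβ

end LayerMatrix

open LayerMatrix in
theorem layer_matrix_strictly_diagonally_dominant_general
    (Bx BY bx bY m : ℕ)
    (c : ℕ → ℕ → ℕ → ℂ)
    (xβ yβ : ℕ) (hxβ : xβ ≤ bx) (hyβ : yβ ≤ bY)
    (hdom : ∑ p ∈ ((Finset.range (bx + 1)) ×ˢ (Finset.range (bY + 1))).erase (xβ, yβ),
        ‖c p.1 p.2 m‖ < ‖c xβ yβ m‖)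
    (T : Matrix (↥((Finset.Icc xβ (Bx - bx + xβ)) ×ˢ (Finset.Icc yβ (BY - bY + yβ))))
                (↥((Finset.Icc xβ (Bx - bx + xβ)) ×ˢ (Finset.Icc yβ (BY - bY + yβ)))) ℂ)
    (hT : ∀ p q, T p q =
      if 0 ≤ ((q : ℕ × ℕ).1 : ℤ) - ((p : ℕ × ℕ).1 : ℤ) + (xβ : ℤ) ∧
         ((q : ℕ × ℕ).1 : ℤ) - ((p : ℕ × ℕ).1 : ℤ) + (xβ : ℤ) ≤ (bx : ℤ) ∧
         0 ≤ ((q : ℕ × ℕ).2 : ℤ) - ((p : ℕ × ℕ).2 : ℤ) + (yβ : ℤ) ∧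
         ((q : ℕ × ℕ).2 : ℤ) - ((p : ℕ × ℕ).2 : ℤ) + (yβ : ℤ) ≤ (bY : ℤ)
      then c (((q : ℕ × ℕ).1 : ℤ) - ((p : ℕ × ℕ).1 : ℤ) + (xβ : ℤ)).toNat
             (((q : ℕ × ℕ).2 : ℤ) - ((p : ℕ × ℕ).2 : ℤ) + (yβ : ℤ)).toNat m
      else 0) :
    ∀ p, (∑ q ∈ Finset.univ.erase p, ‖T p q‖) ≤
          ∑ α ∈ ((Finset.range (bx + 1)) ×ˢ (Finset.range (bY + 1))).erase (xβ, yβ),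
            ‖c α.1 α.2 m‖ ∧
        (∑ α ∈ ((Finset.range (bx + 1)) ×ˢ (Finset.range (bY + 1))).erase (xβ, yβ),
            ‖c α.1 α.2 m‖) < ‖c xβ yβ m‖ ∧
        ‖c xβ yβ m‖ = ‖T p p‖ := by
  have hT' : ∀ p q, T p q = boxExtend (c · · m) bx bY (shift (xβ, yβ) p q) := hT
  intro p
  refine ⟨?_, hdom, ?_⟩
  · simp only [hT']
    exact sum_erase_norm_boxExtend_shift_le (Function.Embedding.subtype _) (xβ, yβ) p
  · rw [hT', boxExtend_shift_self (c := (c · · m)) hxβ hyβ]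

/-- The matrix of the one-layer linear system arising from the Cauchy problem is
strictly diagonally dominant by rows: for every row `p`, the sum of the absolute values
of the off-diagonal entries is at most the dominance sum, which is strictly smaller
than `|c xβ yβ m| = |T p p|`. The index set `I` is the set of interior indices
`{(x,y) : xβ ≤ x ≤ Bx − bx + xβ, yβ ≤ y ≤ BY − bY + yβ}` of a horizontal layer, and
`T (x,y) (x',y') = c (x'−x+xβ) (y'−y+yβ) m` when `0 ≤ x'−x+xβ ≤ bx` and
`0 ≤ y'−y+yβ ≤ bY` (as integers), and `0` otherwise. -/
theorem layer_matrix_strictly_diagonally_dominant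
    (Bx BY bx bY m : ℕ) (hbx : bx < Bx) (hbY : bY < BY) (hm : 1 ≤ m)
    (c : ℕ → ℕ → ℕ → ℂ)
    (xβ yβ : ℕ) (hxβ : xβ ≤ bx) (hyβ : yβ ≤ bY)
    (hc : c xβ yβ m ≠ 0)
    (hdom : ∑ p ∈ ((Finset.range (bx + 1)) ×ˢ (Finset.range (bY + 1))).erase (xβ, yβ),
        ‖c p.1 p.2 m‖ < ‖c xβ yβ m‖)
    (T : Matrix (↥((Finset.Icc xβ (Bx - bx + xβ)) ×ˢ (Finset.Icc yβ (BY - bY + yβ))))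
                (↥((Finset.Icc xβ (Bx - bx + xβ)) ×ˢ (Finset.Icc yβ (BY - bY + yβ)))) ℂ)
    (hT : ∀ p q, T p q =
      if 0 ≤ ((q : ℕ × ℕ).1 : ℤ) - ((p : ℕ × ℕ).1 : ℤ) + (xβ : ℤ) ∧
         ((q : ℕ × ℕ).1 : ℤ) - ((p : ℕ × ℕ).1 : ℤ) + (xβ : ℤ) ≤ (bx : ℤ) ∧
         0 ≤ ((q : ℕ × ℕ).2 : ℤ) - ((p : ℕ × ℕ).2 : ℤ) + (yβ : ℤ) ∧
         ((q : ℕ × ℕ).2 : ℤ) - ((p : ℕ × ℕ).2 : ℤ) + (yβ : ℤ) ≤ (bY : ℤ)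
      then c (((q : ℕ × ℕ).1 : ℤ) - ((p : ℕ × ℕ).1 : ℤ) + (xβ : ℤ)).toNat
             (((q : ℕ × ℕ).2 : ℤ) - ((p : ℕ × ℕ).2 : ℤ) + (yβ : ℤ)).toNat m
      else 0) :
    ∀ p, (∑ q ∈ Finset.univ.erase p, ‖T p q‖) ≤
          ∑ α ∈ ((Finset.range (bx + 1)) ×ˢ (Finset.range (bY + 1))).erase (xβ, yβ),
            ‖c α.1 α.2 m‖ ∧
        (∑ α ∈ ((Finset.range (bx + 1)) ×ˢ (Finset.range (bY + 1))).erase (xβ, yβ),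
            ‖c α.1 α.2 m‖) < ‖c xβ yβ m‖ ∧
        ‖c xβ yβ m‖ = ‖T p p‖ :=
  layer_matrix_strictly_diagonally_dominant_general Bx BY bx bY m c xβ yβ hxβ hyβ hdom T hT
end

section
/- Suppose the strict dominance condition |c(xβ, yβ, m)| > Σ_{(α₁,α₂) ≤ (bx,by), (α₁,α₂) ≠ (xβ,yβ)} |c(α₁, α₂, m)| holds. Then the matrix T is invertible (equivalently, det T ≠ 0). (Invertibility of the layer matrix of the Cauchy problem.) -/
/-!
`T` is a Toeplitz matrix: its entry at `(p, q)` depends only on the offset `q - p ∈ ℤ²`, through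
the coefficients `c (·, ·, m)` extended by zero outside the box `[0, bx] × [0, bY]`. Since
`q ↦ q - p` is injective, each off-diagonal row sum of `‖T‖` is at most the sum of the
off-centre coefficients, so the dominance condition makes `T` strictly diagonally dominant,
and Gershgorin's theorem gives `det T ≠ 0`.
-/

open Finset

theorem Finset.sum_erase_norm_comp_le_sum_erase {ι κ E : Type*} [Fintype ι] [DecidableEq ι]
    [DecidableEq κ] [SeminormedAddGroup E] {g : ι → κ} (hg : Function.Injective g)
    (a : κ → E) {S : Finset κ} (hS : ∀ k ∉ S, a k = 0) (p : ι) :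
    ∑ q ∈ univ.erase p, ‖a (g q)‖ ≤ ∑ k ∈ S.erase (g p), ‖a k‖ := by
  calc ∑ q ∈ univ.erase p, ‖a (g q)‖
      = ∑ k ∈ (univ.erase p).image g, ‖a k‖ :=
        (sum_image (f := fun k ↦ ‖a k‖) fun _ _ _ _ h ↦ hg h).symm
    _ = ∑ k ∈ (univ.erase p).image g with k ∈ S, ‖a k‖ :=
        (sum_filter_of_ne fun k _ hk ↦ by_contra fun hkS ↦ hk (by simp [hS k hkS])).symm
    _ ≤ ∑ k ∈ S.erase (g p), ‖a k‖ := by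
        refine sum_le_sum_of_subset_of_nonneg ?_ fun _ _ _ ↦ norm_nonneg _
        intro k hk
        obtain ⟨hk, hkS⟩ := mem_filter.mp hk
        obtain ⟨q, hq, rfl⟩ := mem_image.mp hk
        exact mem_erase.mpr ⟨hg.ne (ne_of_mem_erase hq), hkS⟩

theorem Matrix.det_toeplitz_ne_zero {K G ι : Type*} [NormedField K]
    [AddCommGroup G] [DecidableEq G] [Fintype ι] [DecidableEq ι] {e : ι → G}
    (he : Function.Injective e) (a : G → K) (k₀ : G) {S : Finset G} (hS : ∀ k ∉ S, a k = 0)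
    (hdom : ∑ k ∈ S.erase k₀, ‖a k‖ < ‖a k₀‖) :
    (Matrix.of fun p q ↦ a (e q - e p + k₀)).det ≠ 0 := by
  refine det_ne_zero_of_sum_row_lt_diag fun p ↦ ?_
  have hoffset : Function.Injective fun q ↦ e q - e p + k₀ := fun q q' h ↦ he (by simpa using h)
  simpa using (sum_erase_norm_comp_le_sum_erase hoffset a hS p).trans_lt (by simpa using hdom)

def boxExtend {R : Type*} [Zero R] (bx bY : ℕ) (f : ℕ → ℕ → R) (k : ℤ × ℤ) : R :=
  if 0 ≤ k.1 ∧ k.1 ≤ bx ∧ 0 ≤ k.2 ∧ k.2 ≤ bY then f k.1.toNat k.2.toNat else 0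

def intBox (bx bY : ℕ) : Finset (ℤ × ℤ) :=
  (range (bx + 1) ×ˢ range (bY + 1)).map (Nat.castEmbedding.prodMap Nat.castEmbedding)

theorem boxExtend_natCast {R : Type*} [Zero R] {bx bY i j : ℕ} (hi : i ≤ bx) (hj : j ≤ bY)
    (f : ℕ → ℕ → R) : boxExtend bx bY f ((i : ℤ), (j : ℤ)) = f i j := by
  simp [boxExtend, hi, hj]

theorem boxExtend_eq_zero_of_notMem_intBox {R : Type*} [Zero R] {bx bY : ℕ} (f : ℕ → ℕ → R)
    {k : ℤ × ℤ} (hk : k ∉ intBox bx bY) : boxExtend bx bY f k = 0 := by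
  refine if_neg fun ⟨h1, h2, h3, h4⟩ ↦ hk (mem_map.mpr ⟨(k.1.toNat, k.2.toNat), ?_, ?_⟩)
  · simp only [mem_product, mem_range]
    omega
  · ext <;> simp [h1, h3]

theorem sum_erase_intBox_norm_boxExtend {E : Type*} [SeminormedAddGroup E] (bx bY xβ yβ : ℕ)
    (f : ℕ → ℕ → E) :
    ∑ k ∈ (intBox bx bY).erase ((xβ : ℤ), (yβ : ℤ)), ‖boxExtend bx bY f k‖ =
      ∑ p ∈ (range (bx + 1) ×ˢ range (bY + 1)).erase (xβ, yβ), ‖f p.1 p.2‖ := by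
  have hβ : ((xβ : ℤ), (yβ : ℤ)) = Nat.castEmbedding.prodMap Nat.castEmbedding (xβ, yβ) := rfl
  rw [intBox, hβ, ← map_erase, sum_map]
  refine sum_congr rfl fun p hp ↦ ?_
  obtain ⟨hp1, hp2⟩ := mem_product.mp (mem_of_mem_erase hp)
  exact congrArg norm <| boxExtend_natCast (Nat.lt_succ_iff.mp (mem_range.mp hp1))
    (Nat.lt_succ_iff.mp (mem_range.mp hp2)) f

theorem layer_matrix_invertible_general
    (Bx BY bx bY m : ℕ)
    (c : ℕ → ℕ → ℕ → ℂ)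
    (xβ yβ : ℕ) (hxβ : xβ ≤ bx) (hyβ : yβ ≤ bY)
    (hdom : ∑ p ∈ ((Finset.range (bx + 1)) ×ˢ (Finset.range (bY + 1))).erase (xβ, yβ),
        ‖c p.1 p.2 m‖ < ‖c xβ yβ m‖)
    (T : Matrix (↥((Finset.Icc xβ (Bx - bx + xβ)) ×ˢ (Finset.Icc yβ (BY - bY + yβ))))
                (↥((Finset.Icc xβ (Bx - bx + xβ)) ×ˢ (Finset.Icc yβ (BY - bY + yβ)))) ℂ)
    (hT : ∀ p q, T p q =
      if 0 ≤ ((q : ℕ × ℕ).1 : ℤ) - ((p : ℕ × ℕ).1 : ℤ) + (xβ : ℤ) ∧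
         ((q : ℕ × ℕ).1 : ℤ) - ((p : ℕ × ℕ).1 : ℤ) + (xβ : ℤ) ≤ (bx : ℤ) ∧
         0 ≤ ((q : ℕ × ℕ).2 : ℤ) - ((p : ℕ × ℕ).2 : ℤ) + (yβ : ℤ) ∧
         ((q : ℕ × ℕ).2 : ℤ) - ((p : ℕ × ℕ).2 : ℤ) + (yβ : ℤ) ≤ (bY : ℤ)
      then c (((q : ℕ × ℕ).1 : ℤ) - ((p : ℕ × ℕ).1 : ℤ) + (xβ : ℤ)).toNat
             (((q : ℕ × ℕ).2 : ℤ) - ((p : ℕ × ℕ).2 : ℤ) + (yβ : ℤ)).toNat m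
      else 0) :
    IsUnit T ∧ T.det ≠ 0 := by
  set a := boxExtend bx bY fun i j ↦ c i j m
  let e (p : ↥((Icc xβ (Bx - bx + xβ)) ×ˢ (Icc yβ (BY - bY + yβ)))) : ℤ × ℤ :=
    (((p : ℕ × ℕ).1 : ℤ), ((p : ℕ × ℕ).2 : ℤ))
  have he : Function.Injective e := fun p q h ↦ by
    simp only [e, Prod.mk.injEq, Nat.cast_inj] at h
    exact Subtype.ext (Prod.ext h.1 h.2)
  have hT' : T = Matrix.of fun p q ↦ a (e q - e p + ((xβ : ℤ), (yβ : ℤ))) := by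
    ext p q
    rw [hT]
    rfl
  have hdom' : ∑ k ∈ (intBox bx bY).erase ((xβ : ℤ), (yβ : ℤ)), ‖a k‖ < ‖a (xβ, yβ)‖ := by
    rwa [sum_erase_intBox_norm_boxExtend,
      show a (xβ, yβ) = c xβ yβ m from boxExtend_natCast hxβ hyβ _]
  have hdet : T.det ≠ 0 := hT' ▸ Matrix.det_toeplitz_ne_zero he a _
    (fun _ ↦ boxExtend_eq_zero_of_notMem_intBox _) hdom'
  exact ⟨(Matrix.isUnit_iff_isUnit_det T).mpr hdet.isUnit, hdet⟩

/-- Invertibility of the layer matrix of the Cauchy problem: under the strict dominance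
condition on the top-layer coefficients, the matrix `T` of the one-layer linear system
is invertible, equivalently `det T ≠ 0`. The index set `I` is the set of interior
indices `{(x,y) : xβ ≤ x ≤ Bx − bx + xβ, yβ ≤ y ≤ BY − bY + yβ}` of a horizontal layer,
and `T (x,y) (x',y') = c (x'−x+xβ) (y'−y+yβ) m` when `0 ≤ x'−x+xβ ≤ bx` and
`0 ≤ y'−y+yβ ≤ bY` (as integers), and `0` otherwise. -/
theorem layer_matrix_invertible
    (Bx BY bx bY m : ℕ) (hbx : bx < Bx) (hbY : bY < BY) (hm : 1 ≤ m)
    (c : ℕ → ℕ → ℕ → ℂ)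
    (xβ yβ : ℕ) (hxβ : xβ ≤ bx) (hyβ : yβ ≤ bY)
    (hc : c xβ yβ m ≠ 0)
    (hdom : ∑ p ∈ ((Finset.range (bx + 1)) ×ˢ (Finset.range (bY + 1))).erase (xβ, yβ),
        ‖c p.1 p.2 m‖ < ‖c xβ yβ m‖)
    (T : Matrix (↥((Finset.Icc xβ (Bx - bx + xβ)) ×ˢ (Finset.Icc yβ (BY - bY + yβ))))
                (↥((Finset.Icc xβ (Bx - bx + xβ)) ×ˢ (Finset.Icc yβ (BY - bY + yβ)))) ℂ)
    (hT : ∀ p q, T p q =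
      if 0 ≤ ((q : ℕ × ℕ).1 : ℤ) - ((p : ℕ × ℕ).1 : ℤ) + (xβ : ℤ) ∧
         ((q : ℕ × ℕ).1 : ℤ) - ((p : ℕ × ℕ).1 : ℤ) + (xβ : ℤ) ≤ (bx : ℤ) ∧
         0 ≤ ((q : ℕ × ℕ).2 : ℤ) - ((p : ℕ × ℕ).2 : ℤ) + (yβ : ℤ) ∧
         ((q : ℕ × ℕ).2 : ℤ) - ((p : ℕ × ℕ).2 : ℤ) + (yβ : ℤ) ≤ (bY : ℤ)
      then c (((q : ℕ × ℕ).1 : ℤ) - ((p : ℕ × ℕ).1 : ℤ) + (xβ : ℤ)).toNat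
             (((q : ℕ × ℕ).2 : ℤ) - ((p : ℕ × ℕ).2 : ℤ) + (yβ : ℤ)).toNat m
      else 0) :
    IsUnit T ∧ T.det ≠ 0 :=
  layer_matrix_invertible_general Bx BY bx bY m c xβ yβ hxβ hyβ hdom T hT
end

section
/- Suppose the strict dominance condition |c(xβ, yβ, m)| > Σ_{(α₁,α₂) ≤ (bx,by), (α₁,α₂) ≠ (xβ,yβ)} |c(α₁, α₂, m)| holds, and let f₁, f₂ : ℕ³ → ℂ both satisfy Σ_{i ≤ bx, j ≤ by, k ≤ m} c(i,j,k) · f(x+i, y+j, z+k) = g(x,y,z) for all (x,y,z) ∈ E with the same right-hand side g, and f₁ = f₂ = φ on L with the same initial data φ. Fix N ∈ ℕ. If f₁ and f₂ agree at all points of Π of height z < N + m, then f₁ and f₂ agree at all points of Π of height z ≤ N + m. (Inductive layer-by-layer uniqueness: agreement on the first m + N layers propagates to the next layer.) -/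
/-!
On the layer `z = N + m` the difference `u = f₁ - f₂` vanishes off the band `Π_β` (same
initial data), and, since all lower layers already agree, it satisfies the homogeneous
two-dimensional equation with the top coefficients `c(·,·,m)`. Take a point of the rectangle
where `‖u‖` is maximal, equal to `M`. If `M > 0` the point lies in the band, and the equation
centred so that the dominant coefficient hits it gives `‖c β‖ M ≤ (∑_{α ≠ β} ‖c α‖) M`,
contradicting strict dominance. Hence `u = 0` on that layer.
-/

open Finset

theorem norm_mul_norm_le_of_sum_mul_eq_zero {ι 𝕜 : Type*} [DecidableEq ι] [NormedDivisionRing 𝕜]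
    {s : Finset ι} {a v : ι → 𝕜} {β : ι} {M : ℝ} (hβ : β ∈ s)
    (hsum : ∑ p ∈ s, a p * v p = 0) (hM : ∀ p ∈ s.erase β, ‖v p‖ ≤ M) :
    ‖a β‖ * ‖v β‖ ≤ (∑ p ∈ s.erase β, ‖a p‖) * M := by
  have hsplit := add_sum_erase s (fun p => a p * v p) hβ
  rw [hsum] at hsplit
  calc ‖a β‖ * ‖v β‖ = ‖∑ p ∈ s.erase β, a p * v p‖ := by
        rw [← norm_mul, eq_neg_of_add_eq_zero_left hsplit, norm_neg]
    _ ≤ ∑ p ∈ s.erase β, ‖a p * v p‖ := norm_sum_le _ _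
    _ ≤ ∑ p ∈ s.erase β, ‖a p‖ * M := sum_le_sum fun p hp => by
        rw [norm_mul]
        exact mul_le_mul_of_nonneg_left (hM p hp) (norm_nonneg _)
    _ = (∑ p ∈ s.erase β, ‖a p‖) * M := (sum_mul _ _ _).symm

section Stencil

variable {R : Type*}

def stencil [Semiring R] (a : ℕ → ℕ → R) (bx bY : ℕ) (u : ℕ → ℕ → R) (x y : ℕ) : R :=
  ∑ i ∈ range (bx + 1), ∑ j ∈ range (bY + 1), a i j * u (x + i) (y + j)

def stencil3 [Semiring R] (c : ℕ → ℕ → ℕ → R) (bx bY m : ℕ) (f : ℕ → ℕ → ℕ → R)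
    (x y z : ℕ) : R :=
  ∑ i ∈ range (bx + 1), ∑ j ∈ range (bY + 1), ∑ k ∈ range (m + 1),
    c i j k * f (x + i) (y + j) (z + k)

theorem stencil3_sub [Ring R] (c : ℕ → ℕ → ℕ → R) (bx bY m : ℕ) (f₁ f₂ : ℕ → ℕ → ℕ → R)
    (x y z : ℕ) :
    stencil3 c bx bY m (f₁ - f₂) x y z =
      stencil3 c bx bY m f₁ x y z - stencil3 c bx bY m f₂ x y z := by
  simp only [stencil3, Pi.sub_apply, mul_sub, sum_sub_distrib]

theorem stencil3_eq_stencil_top [Semiring R] {c : ℕ → ℕ → ℕ → R} {bx bY m : ℕ}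
    {f : ℕ → ℕ → ℕ → R} {x y z : ℕ}
    (hlow : ∀ i ≤ bx, ∀ j ≤ bY, ∀ k < m, f (x + i) (y + j) (z + k) = 0) :
    stencil3 c bx bY m f x y z =
      stencil (fun i j => c i j m) bx bY (fun a b => f a b (z + m)) x y := by
  refine sum_congr rfl fun i hi => sum_congr rfl fun j hj => ?_
  rw [sum_range_succ, sum_eq_zero fun k hk => ?_, zero_add]
  rw [hlow i (Nat.lt_succ_iff.mp (mem_range.mp hi)) j (Nat.lt_succ_iff.mp (mem_range.mp hj)) k
    (mem_range.mp hk), mul_zero]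

/-- Discrete maximum principle for a stencil with a strictly dominant coefficient. -/
theorem eq_zero_of_stencil_eq_zero_of_dominant {𝕜 : Type*} [NormedDivisionRing 𝕜]
    {a u : ℕ → ℕ → 𝕜} {Bx BY bx bY xβ yβ : ℕ} (hbx : bx ≤ Bx) (hbY : bY ≤ BY)
    (hxβ : xβ ≤ bx) (hyβ : yβ ≤ bY)
    (hdom : ∑ p ∈ (range (bx + 1) ×ˢ range (bY + 1)).erase (xβ, yβ), ‖a p.1 p.2‖ < ‖a xβ yβ‖)
    (hstencil : ∀ x y, x ≤ Bx - bx → y ≤ BY - bY → stencil a bx bY u x y = 0)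
    (hout : ∀ x y, x ≤ Bx → y ≤ BY →
      ¬(xβ ≤ x ∧ x ≤ Bx - bx + xβ ∧ yβ ≤ y ∧ y ≤ BY - bY + yβ) → u x y = 0)
    (x y : ℕ) (hx : x ≤ Bx) (hy : y ≤ BY) : u x y = 0 := by
  obtain ⟨⟨x₀, y₀⟩, hp₀, hmax⟩ := (range (Bx + 1) ×ˢ range (BY + 1)).exists_max_image
    (fun p => ‖u p.1 p.2‖) ⟨(0, 0), by simp⟩
  simp only [mem_product, mem_range, Nat.lt_succ_iff] at hp₀
  have hle : ∀ x y, x ≤ Bx → y ≤ BY → ‖u x y‖ ≤ ‖u x₀ y₀‖ := fun x y hx hy =>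
    hmax (x, y) (by simp [hx, hy])
  suffices hM : ‖u x₀ y₀‖ = 0 from norm_le_zero_iff.mp (hM ▸ hle x y hx hy)
  by_contra hM
  have hMpos : 0 < ‖u x₀ y₀‖ := (norm_nonneg _).lt_of_ne' hM
  have hband : xβ ≤ x₀ ∧ x₀ ≤ Bx - bx + xβ ∧ yβ ≤ y₀ ∧ y₀ ≤ BY - bY + yβ := by
    by_contra hnot
    exact hM (by rw [hout x₀ y₀ hp₀.1 hp₀.2 hnot, norm_zero])
  have hbound := norm_mul_norm_le_of_sum_mul_eq_zero (a := fun p => a p.1 p.2)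
    (v := fun p => u (x₀ - xβ + p.1) (y₀ - yβ + p.2)) (M := ‖u x₀ y₀‖)
    (s := range (bx + 1) ×ˢ range (bY + 1)) (β := (xβ, yβ))
    (by simp [hxβ, hyβ])
    (by rw [sum_product]; exact hstencil _ _ (by omega) (by omega))
    (fun p hp => by
      simp only [mem_erase, mem_product, mem_range] at hp
      exact hle _ _ (by omega) (by omega))
  simp only [Nat.sub_add_cancel hband.1, Nat.sub_add_cancel hband.2.2.1] at hbound
  linarith [mul_lt_mul_of_pos_right hdom hMpos]

end Stencil

theorem layerwise_uniqueness_step_general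
    (Bx BY bx bY m : ℕ) (hbx : bx < Bx) (hbY : bY < BY)
    (c : ℕ → ℕ → ℕ → ℂ)
    (xβ yβ : ℕ) (hxβ : xβ ≤ bx) (hyβ : yβ ≤ bY)
    (hdom : ∑ p ∈ ((Finset.range (bx + 1)) ×ˢ (Finset.range (bY + 1))).erase (xβ, yβ),
        ‖c p.1 p.2 m‖ < ‖c xβ yβ m‖)
    (g φ f₁ f₂ : ℕ → ℕ → ℕ → ℂ)
    (heq₁ : ∀ x y z : ℕ, x ≤ Bx - bx → y ≤ BY - bY →
      ∑ i ∈ Finset.range (bx + 1), ∑ j ∈ Finset.range (bY + 1),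
        ∑ k ∈ Finset.range (m + 1),
          c i j k * f₁ (x + i) (y + j) (z + k) = g x y z)
    (heq₂ : ∀ x y z : ℕ, x ≤ Bx - bx → y ≤ BY - bY →
      ∑ i ∈ Finset.range (bx + 1), ∑ j ∈ Finset.range (bY + 1),
        ∑ k ∈ Finset.range (m + 1),
          c i j k * f₂ (x + i) (y + j) (z + k) = g x y z)
    (hL₁ : ∀ x y z : ℕ, (x ≤ Bx ∧ y ≤ BY) ∧
        ¬(xβ ≤ x ∧ x ≤ Bx - bx + xβ ∧ yβ ≤ y ∧ y ≤ BY - bY + yβ ∧ m ≤ z) →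
      f₁ x y z = φ x y z)
    (hL₂ : ∀ x y z : ℕ, (x ≤ Bx ∧ y ≤ BY) ∧
        ¬(xβ ≤ x ∧ x ≤ Bx - bx + xβ ∧ yβ ≤ y ∧ y ≤ BY - bY + yβ ∧ m ≤ z) →
      f₂ x y z = φ x y z)
    (N : ℕ)
    (hind : ∀ x y z : ℕ, x ≤ Bx → y ≤ BY → z < N + m → f₁ x y z = f₂ x y z) :
    ∀ x y z : ℕ, x ≤ Bx → y ≤ BY → z ≤ N + m → f₁ x y z = f₂ x y z := by
  intro x y z hx hy hz
  obtain hz | rfl := hz.lt_or_eq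
  · exact hind x y z hx hy hz
  have htop : ∀ a b, a ≤ Bx - bx → b ≤ BY - bY →
      stencil (fun i j => c i j m) bx bY (fun a b => (f₁ - f₂) a b (N + m)) a b = 0 := by
    intro a b ha hb
    rw [← stencil3_eq_stencil_top fun i hi j hj k hk =>
        sub_eq_zero.2 (hind _ _ _ (by omega) (by omega) (by omega)),
      stencil3_sub]
    exact sub_eq_zero.2 ((heq₁ a b N ha hb).trans (heq₂ a b N ha hb).symm)
  have hout : ∀ a b, a ≤ Bx → b ≤ BY →
      ¬(xβ ≤ a ∧ a ≤ Bx - bx + xβ ∧ yβ ≤ b ∧ b ≤ BY - bY + yβ) → (f₁ - f₂) a b (N + m) = 0 :=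
    fun a b ha hb hnot => sub_eq_zero.2 <|
      (hL₁ a b _ ⟨⟨ha, hb⟩, by tauto⟩).trans (hL₂ a b _ ⟨⟨ha, hb⟩, by tauto⟩).symm
  exact sub_eq_zero.1
    (eq_zero_of_stencil_eq_zero_of_dominant hbx.le hbY.le hxβ hyβ hdom htop hout x y hx hy)

/-- Inductive layer-by-layer uniqueness: if two solutions `f₁, f₂` of the Cauchy
problem (same equation on `E`, same right-hand side `g`, same initial data `φ` on
`L = Π \ Π_β`) agree at all points of `Π` of height `z < N + m`, then they agree at all
points of `Π` of height `z ≤ N + m`. -/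
theorem layerwise_uniqueness_step
    (Bx BY bx bY m : ℕ) (hbx : bx < Bx) (hbY : bY < BY) (hm : 1 ≤ m)
    (c : ℕ → ℕ → ℕ → ℂ)
    (xβ yβ : ℕ) (hxβ : xβ ≤ bx) (hyβ : yβ ≤ bY)
    (hc : c xβ yβ m ≠ 0)
    (hdom : ∑ p ∈ ((Finset.range (bx + 1)) ×ˢ (Finset.range (bY + 1))).erase (xβ, yβ),
        ‖c p.1 p.2 m‖ < ‖c xβ yβ m‖)
    (g φ f₁ f₂ : ℕ → ℕ → ℕ → ℂ)
    (heq₁ : ∀ x y z : ℕ, x ≤ Bx - bx → y ≤ BY - bY →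
      ∑ i ∈ Finset.range (bx + 1), ∑ j ∈ Finset.range (bY + 1),
        ∑ k ∈ Finset.range (m + 1),
          c i j k * f₁ (x + i) (y + j) (z + k) = g x y z)
    (heq₂ : ∀ x y z : ℕ, x ≤ Bx - bx → y ≤ BY - bY →
      ∑ i ∈ Finset.range (bx + 1), ∑ j ∈ Finset.range (bY + 1),
        ∑ k ∈ Finset.range (m + 1),
          c i j k * f₂ (x + i) (y + j) (z + k) = g x y z)
    (hL₁ : ∀ x y z : ℕ, (x ≤ Bx ∧ y ≤ BY) ∧
        ¬(xβ ≤ x ∧ x ≤ Bx - bx + xβ ∧ yβ ≤ y ∧ y ≤ BY - bY + yβ ∧ m ≤ z) →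
      f₁ x y z = φ x y z)
    (hL₂ : ∀ x y z : ℕ, (x ≤ Bx ∧ y ≤ BY) ∧
        ¬(xβ ≤ x ∧ x ≤ Bx - bx + xβ ∧ yβ ≤ y ∧ y ≤ BY - bY + yβ ∧ m ≤ z) →
      f₂ x y z = φ x y z)
    (N : ℕ)
    (hind : ∀ x y z : ℕ, x ≤ Bx → y ≤ BY → z < N + m → f₁ x y z = f₂ x y z) :
    ∀ x y z : ℕ, x ≤ Bx → y ≤ BY → z ≤ N + m → f₁ x y z = f₂ x y z :=
  layerwise_uniqueness_step_general Bx BY bx bY m hbx hbY c xβ yβ hxβ hyβ hdom g φ f₁ f₂ heq₁ heq₂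
    hL₁ hL₂ N hind
end
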